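/- For every dimension n ≥ 2 and every real special orthogonal matrix V ∈ ℝ^{n×n} (i.e., V Vᵀ = I_n and det V = 1), there exists a family of angles θ = (θ_{ij})_{1 ≤ i < j ≤ n} in ℝ such that V = ∏_{i=1}^{n−1} ∏_{j=i+1}^{n} G_{ij}(θ_{ij}), with the factors multiplied in lexicographic order of (i,j). -/

import Mathlib

open Matrix

/-- The Givens rotation matrix `G_{ij}(θ) ∈ ℝ^{n×n}`: the identity matrix except for the
entries `(i,i) = (j,j) = cos θ`, `(i,j) = -sin θ` and `(j,i) = sin θ`. -/
noncomputable def givensMat (n : ℕ) (i j : Fin n) (θ : ℝ) : Matrix (Fin n) (Fin n) ℝ :=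
  fun k l =>
    if k = i ∧ l = i then Real.cos θ
    else if k = j ∧ l = j then Real.cos θ
    else if k = i ∧ l = j then -Real.sin θ
    else if k = j ∧ l = i then Real.sin θ
    else if k = l then 1 else 0

/-- `V(θ) = ∏_{i=1}^{n-1} ∏_{j=i+1}^{n} G_{ij}(θ_{ij})`, the factors multiplied in
lexicographic order of the index pairs `(i,j)`. -/
noncomputable def rotMat (n : ℕ) (θ : Fin n → Fin n → ℝ) : Matrix (Fin n) (Fin n) ℝ :=
  (((List.finRange n).map (fun i =>
      ((List.finRange n).filter (fun j => i < j)).map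
        (fun j => givensMat n i j (θ i j)))).flatten).prod

/-!
Induction on `n`. For `V ∈ SO(n+1)`, the rotations `G_{01}(φ₁), …, G_{0n}(φₙ)` can be chosen one
plane at a time so that their product `P` sends `e₀` to the first column of `V`: reading the
product from the right, each factor rotates the vector built so far within the plane `(0, j)`
to reach the `j`-th coordinate of the target. Then `Pᵀ V` is special orthogonal and fixes `e₀`,
so it is `diag(1, V')` with `V' ∈ SO(n)`, and `P · diag(1, V(θ'))` is exactly `V(θ)` split into
its factors with `i = 0` and the rest. For `n + 1 = 1` there is no rotation at all; there
`det V = 1` is what excludes `V = (-1)`.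
-/

lemma exists_sqrt_mul_cos_eq (a b : ℝ) :
    ∃ c, √(a ^ 2 + b ^ 2) * Real.cos c = a ∧ √(a ^ 2 + b ^ 2) * Real.sin c = b := by
  have h : √(a ^ 2 + b ^ 2) = ‖(⟨a, b⟩ : ℂ)‖ := by
    rw [Complex.norm_def, Complex.normSq_mk]; ring_nf
  exact ⟨Complex.arg ⟨a, b⟩, by rw [h, Complex.norm_mul_cos_arg], by rw [h, Complex.norm_mul_sin_arg]⟩

section Givens

variable {n : ℕ} {i j : Fin n}

lemma givensMat_mulVec (hij : i ≠ j) (θ : ℝ) (v : Fin n → ℝ) :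
    givensMat n i j θ *ᵥ v = fun k =>
      if k = i then Real.cos θ * v i - Real.sin θ * v j
      else if k = j then Real.sin θ * v i + Real.cos θ * v j
      else v k := by
  funext k
  simp only [mulVec, dotProduct, givensMat]
  by_cases hki : k = i
  · subst hki
    rw [Fintype.sum_eq_add k j hij fun l hl => by simp [hl.1, hl.2, hij, Ne.symm hl.1]]
    simp only [and_self, ↓reduceIte, Ne.symm hij, and_false, hij, and_true, neg_mul]
    ring
  by_cases hkj : k = j
  · subst hkj
    rw [Fintype.sum_eq_add i k hij fun l hl => by simp [hl.1, hl.2, hki, Ne.symm hl.2]]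
    simp [hki, Ne.symm hki]
  · rw [Fintype.sum_eq_single k fun l hl => by simp [hki, hkj, Ne.symm hl]]
    simp [hki, hkj]

lemma givensMat_zero (hij : i ≠ j) : givensMat n i j 0 = 1 :=
  ext_iff_mulVec.2 fun v => by
    rw [givensMat_mulVec hij, one_mulVec]
    funext k
    split_ifs <;> simp_all

lemma givensMat_mul_givensMat (hij : i ≠ j) (α β : ℝ) :
    givensMat n i j α * givensMat n i j β = givensMat n i j (α + β) :=
  ext_iff_mulVec.2 fun v => by
    rw [← mulVec_mulVec]
    simp only [givensMat_mulVec hij, if_pos, if_neg hij.symm, Real.cos_add,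
      Real.sin_add]
    funext k
    split_ifs <;> ring

lemma givensMat_transpose (i j : Fin n) (θ : ℝ) :
    (givensMat n i j θ)ᵀ = givensMat n i j (-θ) := by
  ext k l
  simp only [transpose_apply, givensMat, Real.cos_neg, Real.sin_neg, neg_neg]
  split_ifs <;> grind

lemma givensMat_mul_transpose (hij : i ≠ j) (θ : ℝ) :
    givensMat n i j θ * (givensMat n i j θ)ᵀ = 1 := by
  rw [givensMat_transpose, givensMat_mul_givensMat hij, add_neg_cancel, givensMat_zero hij]

/-- `det G(θ) = ±1` by orthogonality, and `G(θ) = G(θ/2)²` is a square. -/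
lemma det_givensMat (hij : i ≠ j) (θ : ℝ) : (givensMat n i j θ).det = 1 := by
  have hsq : (givensMat n i j (θ / 2)).det * (givensMat n i j (θ / 2)).det = 1 := by
    simpa only [det_mul, det_transpose, det_one] using
      congrArg det (givensMat_mul_transpose hij (θ / 2))
  rw [← add_halves θ, ← givensMat_mul_givensMat hij, det_mul, hsq]

lemma givensMat_mem_specialOrthogonalGroup (hij : i ≠ j) (θ : ℝ) :
    givensMat n i j θ ∈ specialOrthogonalGroup (Fin n) ℝ :=
  ⟨(mem_orthogonalGroup_iff _ _).2 (givensMat_mul_transpose hij θ), det_givensMat hij θ⟩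

noncomputable def rotateOntoAxis (i j : Fin n) (w : Fin n → ℝ) : Fin n → ℝ :=
  Function.update (Function.update w j 0) i √(w i ^ 2 + w j ^ 2)

lemma rotateOntoAxis_apply_self (w : Fin n → ℝ) :
    rotateOntoAxis i j w i = √(w i ^ 2 + w j ^ 2) := by
  simp [rotateOntoAxis]

lemma rotateOntoAxis_apply_right (hij : i ≠ j) (w : Fin n → ℝ) : rotateOntoAxis i j w j = 0 := by
  simp [rotateOntoAxis, hij.symm]

lemma rotateOntoAxis_apply_of_ne (w : Fin n → ℝ) {k : Fin n} (hki : k ≠ i)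
    (hkj : k ≠ j) : rotateOntoAxis i j w k = w k := by
  simp [rotateOntoAxis, hki, hkj]

lemma sum_rotateOntoAxis_sq (hij : i ≠ j) (w : Fin n → ℝ) :
    ∑ k, rotateOntoAxis i j w k ^ 2 = ∑ k, w k ^ 2 := by
  rw [← sub_eq_zero, ← Finset.sum_sub_distrib, Fintype.sum_eq_add i j hij fun k hk => by
    rw [rotateOntoAxis_apply_of_ne w hk.1 hk.2, sub_self]]
  rw [rotateOntoAxis_apply_self, rotateOntoAxis_apply_right hij, Real.sq_sqrt (by positivity)]
  ring

lemma exists_givensMat_mulVec_rotateOntoAxis (hij : i ≠ j) (w : Fin n → ℝ) :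
    ∃ c, givensMat n i j c *ᵥ rotateOntoAxis i j w = w := by
  obtain ⟨c, hci, hcj⟩ := exists_sqrt_mul_cos_eq (w i) (w j)
  refine ⟨c, funext fun k => ?_⟩
  rw [givensMat_mulVec hij]
  by_cases hki : k = i
  · simp only [hki, if_true, rotateOntoAxis_apply_self, rotateOntoAxis_apply_right hij]
    linarith
  by_cases hkj : k = j
  · simp only [hkj, hij.symm, if_true, if_false, rotateOntoAxis_apply_self,
      rotateOntoAxis_apply_right hij]
    linarith
  · simp [hki, hkj, rotateOntoAxis_apply_of_ne w hki hkj]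

end Givens

lemma exists_prod_givensMat_mulVec_single_eq {n : ℕ} (i : Fin n) (L : List (Fin n))
    (hiL : i ∉ L) (hL : L.Nodup) (w : Fin n → ℝ) (hw : ∀ k, k ≠ i → k ∉ L → w k = 0)
    (hnorm : ∑ k, w k ^ 2 = 1) (hsign : L ≠ [] ∨ 0 ≤ w i) :
    ∃ φ : Fin n → ℝ, (L.map fun j => givensMat n i j (φ j)).prod *ᵥ Pi.single i 1 = w := by
  induction L generalizing w with
  | nil =>
    have hsupp (k : Fin n) (hk : k ≠ i) : w k = 0 := hw k hk List.not_mem_nil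
    have hwi : w i = 1 := by
      rw [Fintype.sum_eq_single i fun k hk => by simp [hsupp k hk]] at hnorm
      nlinarith [hsign.resolve_left (not_not.2 rfl)]
    refine ⟨0, funext fun k => ?_⟩
    by_cases hk : k = i
    · simp [hk, hwi]
    · simp [hk, hsupp k hk]
  | cons j L ih =>
    have hij : i ≠ j := fun h => hiL (h ▸ List.mem_cons_self)
    obtain ⟨hjL, hL⟩ := List.nodup_cons.1 hL
    obtain ⟨c, hc⟩ := exists_givensMat_mulVec_rotateOntoAxis hij w
    obtain ⟨φ, hφ⟩ := ih (fun h => hiL (List.mem_cons_of_mem j h)) hL (rotateOntoAxis i j w)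
      (fun k hki hkL => by
        by_cases hkj : k = j
        · rw [hkj, rotateOntoAxis_apply_right hij]
        · rw [rotateOntoAxis_apply_of_ne w hki hkj, hw k hki (by simp [hkj, hkL])])
      (by rw [sum_rotateOntoAxis_sq hij, hnorm])
      (Or.inr (rotateOntoAxis_apply_self w ▸ Real.sqrt_nonneg _))
    refine ⟨Function.update φ j c, ?_⟩
    have hmap : L.map (fun l => givensMat n i l (Function.update φ j c l)) =
        L.map (fun l => givensMat n i l (φ l)) :=
      List.map_congr_left fun l hl => by rw [Function.update_of_ne (ne_of_mem_of_not_mem hl hjL)]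
    rw [List.map_cons, List.prod_cons, ← mulVec_mulVec, hmap, hφ, Function.update_self, hc]

section BlockDiagOne

variable {R : Type*} [CommRing R] {n : ℕ}

def blockDiagOne (M : Matrix (Fin n) (Fin n) R) : Matrix (Fin (n + 1)) (Fin (n + 1)) R :=
  of (Fin.cons (Fin.cons 1 0) fun k => Fin.cons 0 (M k))

@[simp] lemma blockDiagOne_zero_zero (M : Matrix (Fin n) (Fin n) R) : blockDiagOne M 0 0 = 1 :=
  rfl

@[simp] lemma blockDiagOne_zero_succ (M : Matrix (Fin n) (Fin n) R) (l : Fin n) :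
    blockDiagOne M 0 l.succ = 0 :=
  rfl

@[simp] lemma blockDiagOne_succ_zero (M : Matrix (Fin n) (Fin n) R) (k : Fin n) :
    blockDiagOne M k.succ 0 = 0 :=
  rfl

@[simp] lemma blockDiagOne_succ_succ (M : Matrix (Fin n) (Fin n) R) (k l : Fin n) :
    blockDiagOne M k.succ l.succ = M k l :=
  rfl

lemma blockDiagOne_injective : Function.Injective (blockDiagOne : Matrix (Fin n) (Fin n) R → _) :=
  fun M N h => ext fun k l => by simpa using congr_fun₂ h k.succ l.succ

lemma blockDiagOne_one : blockDiagOne (1 : Matrix (Fin n) (Fin n) R) = 1 := by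
  ext k l
  cases k using Fin.cases <;> cases l using Fin.cases <;> simp [one_apply, eq_comm]

lemma blockDiagOne_mul (M N : Matrix (Fin n) (Fin n) R) :
    blockDiagOne (M * N) = blockDiagOne M * blockDiagOne N := by
  ext k l
  rw [mul_apply, Fin.sum_univ_succ]
  cases k using Fin.cases <;> cases l using Fin.cases <;> simp [mul_apply]

lemma blockDiagOne_list_prod (L : List (Matrix (Fin n) (Fin n) R)) :
    blockDiagOne L.prod = (L.map blockDiagOne).prod := by
  induction L with
  | nil => exact blockDiagOne_one
  | cons M L ih => rw [List.prod_cons, blockDiagOne_mul, ih, List.map_cons, List.prod_cons]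

lemma blockDiagOne_transpose (M : Matrix (Fin n) (Fin n) R) :
    blockDiagOne Mᵀ = (blockDiagOne M)ᵀ := by
  ext k l
  cases k using Fin.cases <;> cases l using Fin.cases <;> simp

lemma det_blockDiagOne (M : Matrix (Fin n) (Fin n) R) : (blockDiagOne M).det = M.det := by
  have hminor : (blockDiagOne M).submatrix Fin.succ (Fin.succAbove 0) = M := rfl
  rw [det_succ_row_zero, Fin.sum_univ_succ, Finset.sum_eq_zero fun j _ => by simp, hminor]
  simp

lemma blockDiagOne_mem_specialOrthogonalGroup_iff {M : Matrix (Fin n) (Fin n) R} :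
    blockDiagOne M ∈ specialOrthogonalGroup (Fin (n + 1)) R ↔
      M ∈ specialOrthogonalGroup (Fin n) R := by
  rw [mem_specialOrthogonalGroup_iff, mem_specialOrthogonalGroup_iff, mem_orthogonalGroup_iff,
    mem_orthogonalGroup_iff, ← blockDiagOne_transpose, ← blockDiagOne_mul, ← blockDiagOne_one,
    blockDiagOne_injective.eq_iff, det_blockDiagOne]

lemma exists_eq_blockDiagOne {W : Matrix (Fin (n + 1)) (Fin (n + 1)) R}
    (hW : W ∈ specialOrthogonalGroup (Fin (n + 1)) R) (hW0 : W *ᵥ Pi.single 0 1 = Pi.single 0 1) :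
    ∃ W' ∈ specialOrthogonalGroup (Fin n) R, W = blockDiagOne W' := by
  have hWtW : Wᵀ * W = 1 := (mem_orthogonalGroup_iff' _ _).1 hW.1
  have hWt0 : Wᵀ *ᵥ Pi.single 0 1 = Pi.single 0 1 := by
    calc Wᵀ *ᵥ Pi.single 0 1 = Wᵀ *ᵥ (W *ᵥ Pi.single 0 1) := by rw [hW0]
      _ = Pi.single 0 1 := by rw [mulVec_mulVec, hWtW, one_mulVec]
  have hW_eq : W = blockDiagOne (W.submatrix Fin.succ Fin.succ) := by
    ext k l
    refine Fin.cases ?_ (fun k => ?_) k <;> refine Fin.cases ?_ (fun l => ?_) l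
    · simpa using congr_fun hW0 0
    · have h := congr_fun hWt0 l.succ
      rwa [mulVec_single_one, Pi.single_eq_of_ne (Fin.succ_ne_zero l)] at h
    · have h := congr_fun hW0 k.succ
      rwa [mulVec_single_one, Pi.single_eq_of_ne (Fin.succ_ne_zero k)] at h
    · rfl
  exact ⟨_, blockDiagOne_mem_specialOrthogonalGroup_iff.1 (hW_eq ▸ hW), hW_eq⟩

end BlockDiagOne

lemma blockDiagOne_givensMat {n : ℕ} (i j : Fin n) (θ : ℝ) :
    blockDiagOne (givensMat n i j θ) = givensMat (n + 1) i.succ j.succ θ := by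
  ext k l
  refine Fin.cases ?_ (fun k => ?_) k <;> refine Fin.cases ?_ (fun l => ?_) l <;>
    simp [givensMat, (Fin.succ_ne_zero _).symm, Fin.succ_ne_zero]

lemma rotMat_succ (n : ℕ) (θ : Fin (n + 1) → Fin (n + 1) → ℝ) :
    rotMat (n + 1) θ =
      ((List.finRange n).map fun j => givensMat (n + 1) 0 j.succ (θ 0 j.succ)).prod *
        blockDiagOne (rotMat n fun i j => θ i.succ j.succ) := by
  rw [rotMat, List.finRange_succ, List.map_cons, List.flatten_cons, List.prod_append]
  congr 1
  · simp [List.filter_map, Function.comp_def, Fin.succ_pos, List.map_map]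
  · rw [rotMat, blockDiagOne_list_prod, List.map_flatten, List.map_map, List.map_map]
    refine congrArg (List.prod ∘ List.flatten) (List.map_congr_left fun i _ => ?_)
    simp [List.filter_map, Function.comp_def, Fin.succ_lt_succ_iff, blockDiagOne_givensMat]

lemma transpose_mem_specialOrthogonalGroup {ι R : Type*} [Fintype ι] [DecidableEq ι]
    [CommRing R] {A : Matrix ι ι R} (hA : A ∈ specialOrthogonalGroup ι R) :
    Aᵀ ∈ specialOrthogonalGroup ι R :=
  ⟨(mem_orthogonalGroup_iff _ _).2 <| by
      rw [transpose_transpose]; exact (mem_orthogonalGroup_iff' _ _).1 hA.1,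
    (det_transpose A).trans hA.2⟩

lemma exists_prod_givensMat_mulVec_single_zero_eq_col {n : ℕ}
    {V : Matrix (Fin (n + 1)) (Fin (n + 1)) ℝ} (hV : V ∈ specialOrthogonalGroup (Fin (n + 1)) ℝ) :
    ∃ φ : Fin (n + 1) → ℝ,
      ((List.finRange n).map fun j => givensMat (n + 1) 0 j.succ (φ j.succ)).prod *ᵥ
        Pi.single 0 1 = V.col 0 := by
  set L := (List.finRange n).map Fin.succ
  have hL (k : Fin (n + 1)) (hk : k ≠ 0) : k ∈ L :=
    List.mem_map.2 ⟨k.pred hk, List.mem_finRange _, Fin.succ_pred k hk⟩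
  have hcol_norm : ∑ k, V k 0 ^ 2 = 1 := by
    simpa [mul_apply, sq] using congr_fun₂ ((mem_orthogonalGroup_iff' _ _).1 hV.1) 0 0
  have hsign : L ≠ [] ∨ 0 ≤ V 0 0 := by
    rcases n with _ | n
    · exact Or.inr (by rw [← det_fin_one V, (mem_specialOrthogonalGroup_iff.1 hV).2]; simp)
    · exact Or.inl (by simp [L])
  obtain ⟨φ, hφ⟩ := exists_prod_givensMat_mulVec_single_eq 0 L (by simp [L])
    ((List.nodup_finRange n).map (Fin.succ_injective n)) (V.col 0)
    (fun k hk hkL => absurd (hL k hk) hkL) hcol_norm hsign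
  exact ⟨φ, by simpa [L, List.map_map, Function.comp_def] using hφ⟩

theorem exists_eq_rotMat_of_mem_specialOrthogonalGroup :
    ∀ {n : ℕ} {V : Matrix (Fin n) (Fin n) ℝ}, V ∈ specialOrthogonalGroup (Fin n) ℝ →
      ∃ θ, V = rotMat n θ
  | 0, V, _ => ⟨0, Subsingleton.elim _ _⟩
  | n + 1, V, hV => by
    obtain ⟨φ, hφ⟩ := exists_prod_givensMat_mulVec_single_zero_eq_col hV
    set P := ((List.finRange n).map fun j => givensMat (n + 1) 0 j.succ (φ j.succ)).prod
    have hP : P ∈ specialOrthogonalGroup (Fin (n + 1)) ℝ :=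
      Submonoid.list_prod_mem _ fun M hM => by
        obtain ⟨j, -, rfl⟩ := List.mem_map.1 hM
        exact givensMat_mem_specialOrthogonalGroup (Fin.succ_ne_zero j).symm _
    have hfix : (Pᵀ * V) *ᵥ Pi.single 0 1 = Pi.single 0 1 := by
      rw [← mulVec_mulVec, mulVec_single_one, ← hφ, mulVec_mulVec,
        (mem_orthogonalGroup_iff' _ _).1 hP.1, one_mulVec]
    obtain ⟨W, hW, hPV⟩ := exists_eq_blockDiagOne
      (mul_mem (transpose_mem_specialOrthogonalGroup hP) hV) hfix
    obtain ⟨θ, rfl⟩ := exists_eq_rotMat_of_mem_specialOrthogonalGroup hW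
    refine ⟨Fin.cons φ fun i => Fin.cons 0 (θ i), ?_⟩
    calc V = P * (Pᵀ * V) := by
          rw [← Matrix.mul_assoc, (mem_orthogonalGroup_iff _ _).1 hP.1, Matrix.one_mul]
      _ = _ := by rw [hPV, rotMat_succ]; rfl

theorem specialOrthogonal_eq_rotMat_general (n : ℕ) (V : Matrix (Fin n) (Fin n) ℝ)
    (hV : V * Vᵀ = 1) (hdet : V.det = 1) :
    ∃ θ : Fin n → Fin n → ℝ, V = rotMat n θ :=
  exists_eq_rotMat_of_mem_specialOrthogonalGroup ⟨(mem_orthogonalGroup_iff _ _).2 hV, hdet⟩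

/-- Every real special orthogonal matrix (V Vᵀ = I, det V = 1) of dimension n ≥ 2 is a
product of Givens rotations in lexicographic order: V = V(θ) for some family of angles. -/
theorem specialOrthogonal_eq_rotMat (n : ℕ) (hn : 2 ≤ n) (V : Matrix (Fin n) (Fin n) ℝ)
    (hV : V * Vᵀ = 1) (hdet : V.det = 1) :
    ∃ θ : Fin n → Fin n → ℝ, V = rotMat n θ :=
  specialOrthogonal_eq_rotMat_general n V hV hdet
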